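/- arXiv:2310.03601 — 2 statements merged into one kernel-verified Lean document; each statement's English description precedes it below -/
import Mathlib

section
/- Every finite 4k-edge-connected multigraph contains 2k pairwise edge-disjoint spanning trees, and consequently admits a k-arc-connected orientation obtained by rooting all trees at a common vertex and orienting k of the trees away from the root and k towards the root. -/
namespace NW
open Classical
noncomputable section

/-- A multigraph on vertex type `V` with edge type `E`: each edge has two endpoints
(given with an arbitrary reference direction). -/
structure Multigraph (V : Type) (E : Type) where
  fst : E → V
  snd : E → V

namespace Multigraph

variable {V E : Type}

/-- Source of an oriented step `(e, b)`: traversing `e` forwards if `b = true`. -/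
def src (G : Multigraph V E) (s : E × Bool) : V := if s.2 then G.fst s.1 else G.snd s.1

/-- Target of an oriented step. -/
def dst (G : Multigraph V E) (s : E × Bool) : V := if s.2 then G.snd s.1 else G.fst s.1

/-- `l` is a walk from `x` to `y` (a list of oriented steps). -/
def IsWalk (G : Multigraph V E) (x y : V) (l : List (E × Bool)) : Prop :=
  l.Chain' (fun s t => G.dst s = G.src t) ∧
  ((l = [] ∧ x = y) ∨
    (∃ s t, l.head? = some s ∧ l.getLast? = some t ∧ G.src s = x ∧ G.dst t = y))

/-- A trail: a walk with pairwise distinct edges. -/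
def IsTrail (G : Multigraph V E) (x y : V) (l : List (E × Bool)) : Prop :=
  G.IsWalk x y l ∧ (l.map Prod.fst).Nodup

/-- There exist `m` pairwise edge-disjoint `x`–`y` paths. -/
def ConnAtLeast (G : Multigraph V E) (x y : V) (m : ℕ) : Prop :=
  ∃ f : Fin m → List (E × Bool),
    (∀ i, G.IsTrail x y (f i)) ∧
    ∀ i j, i ≠ j → ((f i).map Prod.fst).Disjoint ((f j).map Prod.fst)

/-- The local edge-connectivity `λ(x,y)`. -/
noncomputable def lam (G : Multigraph V E) (x y : V) : ℕ :=
  sSup {m | G.ConnAtLeast x y m}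

/-- `λ*(x,y)`: greatest even number not exceeding `λ(x,y)`. -/
noncomputable def lamStar (G : Multigraph V E) (x y : V) : ℕ :=
  2 * (G.lam x y / 2)

/-- Edge boundary `δ(X)`. -/
def cut (G : Multigraph V E) (X : Set V) : Set E :=
  {e | (G.fst e ∈ X ∧ G.snd e ∉ X) ∨ (G.fst e ∉ X ∧ G.snd e ∈ X)}

/-- `E(X,Y)`: edges with one end in `X` and the other in `Y`. -/
def between (G : Multigraph V E) (X Y : Set V) : Set E :=
  {e | (G.fst e ∈ X ∧ G.snd e ∈ Y) ∨ (G.fst e ∈ Y ∧ G.snd e ∈ X)}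

/-- Degree of a vertex. -/
noncomputable def deg (G : Multigraph V E) (v : V) : ℕ :=
  {e | G.fst e = v}.ncard + {e | G.snd e = v}.ncard

/-- `e` is incident with `v`. -/
def Inc (G : Multigraph V E) (e : E) (v : V) : Prop := G.fst e = v ∨ G.snd e = v

/-- `k`-edge-connectedness: every nonempty proper vertex set has boundary of size at least `k`. -/
def EdgeConnected (G : Multigraph V E) (k : ℕ) : Prop :=
  ∀ X : Set V, X.Nonempty → Xᶜ.Nonempty → k ≤ (G.cut X).ncard

/-- Tail of edge `e` under the orientation `o`. -/
def tailO (G : Multigraph V E) (o : E → Bool) (e : E) : V := if o e then G.fst e else G.snd e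

/-- Head of edge `e` under the orientation `o`. -/
def headO (G : Multigraph V E) (o : E → Bool) (e : E) : V := if o e then G.snd e else G.fst e

/-- Directed walk from `x` to `y` in the orientation `o`. -/
def IsDiWalk (G : Multigraph V E) (o : E → Bool) (x y : V) (l : List E) : Prop :=
  l.Chain' (fun e f => G.headO o e = G.tailO o f) ∧
  ((l = [] ∧ x = y) ∨
    (∃ e f, l.head? = some e ∧ l.getLast? = some f ∧ G.tailO o e = x ∧ G.headO o f = y))

/-- There exist `m` pairwise arc-disjoint directed paths from `x` to `y`. -/
def DiConnAtLeast (G : Multigraph V E) (o : E → Bool) (x y : V) (m : ℕ) : Prop :=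
  ∃ g : Fin m → List E,
    (∀ i, G.IsDiWalk o x y (g i) ∧ (g i).Nodup) ∧
    ∀ i j, i ≠ j → (g i).Disjoint (g j)

/-- A well-balanced orientation. -/
def WellBalanced (G : Multigraph V E) (o : E → Bool) : Prop :=
  ∀ x y : V, x ≠ y → G.DiConnAtLeast o x y (G.lamStar x y / 2)

def Reachable (G : Multigraph V E) (x y : V) : Prop := ∃ l, G.IsWalk x y l

def Connected (G : Multigraph V E) : Prop := ∀ x y, G.Reachable x y

/-- `e` is a bridge: its endpoints cannot be joined avoiding `e`. -/
def IsBridge (G : Multigraph V E) (e : E) : Prop :=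
  ¬ ∃ l, G.IsWalk (G.fst e) (G.snd e) l ∧ e ∉ l.map Prod.fst

/-- The endpoint of `e` other than `s`. -/
def other (G : Multigraph V E) (s : V) (e : E) : V :=
  if G.fst e = s then G.snd e else G.fst e

/-- Lifting the edges `e1, e2` at `s`: delete both, add a new edge (reusing the name `e1`)
joining their other endpoints. -/
def lift (G : Multigraph V E) (s : V) (e1 e2 : E) : Multigraph V {e : E // e ≠ e2} where
  fst := fun e => if e.1 = e1 then G.other s e1 else G.fst e.1
  snd := fun e => if e.1 = e1 then G.other s e2 else G.snd e.1

/-- The pair `e1, e2` at `s` is `τ`-admissible. -/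
def Admissible (G : Multigraph V E) (s : V) (τ : V → V → ℕ) (e1 e2 : E) : Prop :=
  ∀ x y : V, x ≠ s → y ≠ s → (G.lift s e1 e2).ConnAtLeast x y (τ x y)

/-- The lifting graph `L(G,s,τ)` on the edges incident with `s`. -/
def LiftingGraph (G : Multigraph V E) (s : V) (τ : V → V → ℕ) :
    SimpleGraph {e : E // G.Inc e s} where
  Adj e f := e ≠ f ∧ (G.Admissible s τ e.1 f.1 ∨ G.Admissible s τ f.1 e.1)
  symm := ⟨fun _ _ h => ⟨h.1.symm, h.2.symm⟩⟩
  loopless := ⟨fun _ h => h.1 rfl⟩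

/-- The target function `τ_A`. -/
def tauA (A : Set V) (ℓ : ℕ) : V → V → ℕ := fun x y => if x ∈ A ∧ y ∈ A then ℓ else 0

/-- `r_τ(D)`. -/
noncomputable def rTau (s : V) (τ : V → V → ℕ) (D : Set V) : ℕ :=
  sSup {m | ∃ a ∈ D, ∃ b, b ∉ D ∧ b ≠ s ∧ τ a b = m}

/-- A dangerous set with respect to `A` and `ℓ`. -/
def DangerousA (G : Multigraph V E) (A : Set V) (ℓ : ℕ) (D : Set V) : Prop :=
  (D ∩ A).Nonempty ∧ (A \ D).Nonempty ∧ (G.cut D).ncard ≤ ℓ + 1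

/-- Independent set in a simple graph. -/
def IndepIn {α : Type} (L : SimpleGraph α) (s : Set α) : Prop :=
  s.Pairwise fun a b => ¬ L.Adj a b

/-- A one-way infinite path (ray). -/
def IsRay (G : Multigraph V E) (r : ℕ → E × Bool) : Prop :=
  (∀ n, G.dst (r n) = G.src (r (n + 1))) ∧ Function.Injective (fun n => G.src (r n))

def rayVerts (G : Multigraph V E) (r : ℕ → E × Bool) : Set V := {v | ∃ n, G.src (r n) = v}

def rayEdges (r : ℕ → E × Bool) : Set E := {e | ∃ n, (r n).1 = e}

def walkVerts (G : Multigraph V E) (l : List (E × Bool)) : Set V :=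
  {v | ∃ s ∈ l, G.src s = v ∨ G.dst s = v}

/-- Two rays are equivalent if there are infinitely many pairwise vertex-disjoint
paths between them. -/
def RayEquiv (G : Multigraph V E) (r1 r2 : ℕ → E × Bool) : Prop :=
  ∃ (P : ℕ → List (E × Bool)) (a b : ℕ → V),
    (∀ n, a n ∈ G.rayVerts r1 ∧ b n ∈ G.rayVerts r2 ∧ G.IsWalk (a n) (b n) (P n)) ∧
    ∀ m n, m ≠ n →
      Disjoint ({a m, b m} ∪ G.walkVerts (P m)) ({a n, b n} ∪ G.walkVerts (P n))

/-- `B` is boundary-linked: there are pairwise edge-disjoint equivalent rays in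
`G[B]` plus its boundary such that every boundary edge is the first edge of one of them. -/
def BoundaryLinked (G : Multigraph V E) (B : Set V) : Prop :=
  ∃ ρ : G.cut B → (ℕ → E × Bool),
    (∀ e, G.IsRay (ρ e) ∧ (ρ e 0).1 = e.1 ∧
      ∀ n, ((ρ e n).1 ∈ G.cut B ∨ (G.fst (ρ e n).1 ∈ B ∧ G.snd (ρ e n).1 ∈ B))) ∧
    (∀ e f : G.cut B, G.RayEquiv (ρ e) (ρ f)) ∧
    (∀ e f : G.cut B, e ≠ f → Disjoint (rayEdges (ρ e)) (rayEdges (ρ f)))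

def LocallyFinite (G : Multigraph V E) : Prop := ∀ v, {e | G.Inc e v}.Finite

/-- Reachability by a walk avoiding the edge set `F`. -/
def ReachAvoidE (G : Multigraph V E) (F : Set E) (x y : V) : Prop :=
  ∃ l, G.IsWalk x y l ∧ ∀ s ∈ l, s.1 ∉ F

/-- The edge set `F` separates `A'` from the end of the ray `r`. -/
def SeparatesEnd (G : Multigraph V E) (F : Set E) (A' : Set V) (r : ℕ → E × Bool) : Prop :=
  ∃ N, ∀ n, N ≤ n → ∀ a ∈ A', ¬ G.ReachAvoidE F a (G.src (r n))

/-- Reachability by a walk avoiding the vertex set `A`. -/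
def ReachAvoidV (G : Multigraph V E) (A : Set V) (x y : V) : Prop :=
  x ∉ A ∧ y ∉ A ∧ ∃ l, G.IsWalk x y l ∧ Disjoint (G.walkVerts l) A

/-- `B` is a connected component of `G - A`. -/
def IsComponentOutside (G : Multigraph V E) (A B : Set V) : Prop :=
  ∃ v, v ∉ A ∧ B = {w | G.ReachAvoidV A v w}

/-- A bond: a minimal edge cut. -/
def IsBond (G : Multigraph V E) (F : Set E) : Prop :=
  (∃ Y : Set V, Y.Nonempty ∧ Yᶜ.Nonempty ∧ F = G.cut Y) ∧
  ∀ F' : Set E, F' ⊂ F → ¬ ∃ Y : Set V, Y.Nonempty ∧ Yᶜ.Nonempty ∧ F' = G.cut Y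

/-- A spanning tree given by an edge set `T`: the subgraph `(V, T)` is connected
and contains no closed trail. -/
def IsSpanningTree (G : Multigraph V E) (T : Set E) : Prop :=
  (∀ x y : V, ∃ l, G.IsWalk x y l ∧ ∀ s ∈ l, s.1 ∈ T) ∧
  ∀ (v : V) (l : List (E × Bool)), l ≠ [] → G.IsTrail v v l → (∀ s ∈ l, s.1 ∈ T) → False

end Multigraph

end
end NW

open NW NW.Multigraph


/-!
Tree packing is proved by induction on the number of vertices. Take a packing of `2k`
edge-disjoint forests with as many edges as possible. If some forest does not span, counting
edges across the singleton cuts yields a free non-loop edge `e₀`. Call an edge freeable if some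
sequence of exchanges (a free edge enters a forest, an edge on the path joining its ends leaves)
makes it free. The ends of a freeable edge are joined by freeable edges in every forest, so every
forest spans, from inside, the vertex set `U` of the component of `e₀` formed by the freeable
edges. Contracting `U` (at least two vertices) keeps the graph `4k`-edge-connected; the `2k`
spanning trees of the contraction given by induction, together with the forests inside `U`,
are spanning trees of the graph.

For the orientation, root all trees at one vertex `r` and orient an edge of a tree away from `r`
when its tail lies on the side of `r` after deleting it. Orient `k` trees away from `r` and the
other `k` towards it; the `i`-th path from `v` to `w` runs from `v` to `r` in the `i`-th
in-tree and from `r` to `w` in the `i`-th out-tree.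
-/

namespace NW.Multigraph

open Relation Function

variable {V E : Type}

section Definitions

variable (G : Multigraph V E)

def AdjIn (F : Set E) (x y : V) : Prop :=
  ∃ e ∈ F, (G.fst e = x ∧ G.snd e = y) ∨ (G.fst e = y ∧ G.snd e = x)

def ReachIn (F : Set E) : V → V → Prop := ReflTransGen (G.AdjIn F)

def IsForest (F : Set E) : Prop := ∀ e ∈ F, ¬ G.ReachIn (F \ {e}) (G.fst e) (G.snd e)

def Spans (F : Set E) : Prop := ∀ x y, G.ReachIn F x y

end Definitions

section ReachIn

variable {G : Multigraph V E} {F F' : Set E} {x y z : V}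

instance : Std.Symm (G.AdjIn F) := ⟨fun _ _ ⟨e, he, h⟩ => ⟨e, he, h.symm⟩⟩

@[refl]
lemma ReachIn.refl (x : V) : G.ReachIn F x x := ReflTransGen.refl

lemma ReachIn.of_eq (h : x = y) : G.ReachIn F x y := h ▸ ReachIn.refl x

@[symm]
lemma ReachIn.symm (h : G.ReachIn F x y) : G.ReachIn F y x :=
  Std.Symm.symm (r := ReflTransGen (G.AdjIn F)) _ _ h

@[trans]
lemma ReachIn.trans (h : G.ReachIn F x y) (h' : G.ReachIn F y z) : G.ReachIn F x z :=
  ReflTransGen.trans h h'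

lemma ReachIn.mono (hF : F ⊆ F') (h : G.ReachIn F x y) : G.ReachIn F' x y :=
  ReflTransGen.mono (fun _ _ ⟨e, he, h⟩ => ⟨e, hF he, h⟩) _ _ h

lemma reachIn_of_mem {e : E} (he : e ∈ F) : G.ReachIn F (G.fst e) (G.snd e) :=
  ReflTransGen.single ⟨e, he, Or.inl ⟨rfl, rfl⟩⟩

lemma ReachIn.of_forall_reachIn (hFF' : ∀ e ∈ F, G.ReachIn F' (G.fst e) (G.snd e))
    (h : G.ReachIn F x y) : G.ReachIn F' x y := by
  refine reflTransGen_closed (fun a b ⟨e, he, hab⟩ => ?_) _ _ h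
  rcases hab with ⟨rfl, rfl⟩ | ⟨rfl, rfl⟩
  exacts [hFF' e he, (hFF' e he).symm]

lemma ReachIn.eq_of_empty (h : G.ReachIn ∅ x y) : x = y := by
  induction h with
  | refl => rfl
  | tail _ hstep => exact absurd hstep.choose_spec.1 (Set.notMem_empty _)

lemma ReachIn.of_insert {e : E} (h : G.ReachIn (insert e F) x y) :
    G.ReachIn F x y ∨ (G.ReachIn F x (G.fst e) ∧ G.ReachIn F (G.snd e) y) ∨
      (G.ReachIn F x (G.snd e) ∧ G.ReachIn F (G.fst e) y) := by
  induction h with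
  | refl => exact Or.inl (ReachIn.refl _)
  | @tail b c _ hstep ih =>
    obtain ⟨f, hf, hends⟩ := hstep
    rcases Set.mem_insert_iff.mp hf with rfl | hfF
    · rcases hends with ⟨rfl, rfl⟩ | ⟨rfl, rfl⟩ <;>
        rcases ih with ih | ⟨ih, -⟩ | ⟨ih, -⟩
      exacts [Or.inr (Or.inl ⟨ih, .refl _⟩), Or.inr (Or.inl ⟨ih, .refl _⟩), Or.inl ih,
        Or.inr (Or.inr ⟨ih, .refl _⟩), Or.inl ih, Or.inr (Or.inr ⟨ih, .refl _⟩)]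
    · have hbc : G.ReachIn F b c := ReflTransGen.single ⟨f, hfF, hends⟩
      rcases ih with ih | ⟨ih₁, ih₂⟩ | ⟨ih₁, ih₂⟩
      exacts [Or.inl (ih.trans hbc), Or.inr (Or.inl ⟨ih₁, ih₂.trans hbc⟩),
        Or.inr (Or.inr ⟨ih₁, ih₂.trans hbc⟩)]

lemma ReachIn.sdiff_singleton_snd {e : E} (he : e ∈ F) (h : G.ReachIn F x (G.snd e))
    (hx : ¬ G.ReachIn (F \ {e}) x (G.fst e)) : G.ReachIn (F \ {e}) x (G.snd e) := by
  rw [← Set.insert_sdiff_self_of_mem he] at h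
  rcases h.of_insert with h | ⟨h, -⟩ | ⟨h, -⟩
  exacts [h, absurd h hx, h]

lemma ReachIn.restrict {C : Set V} (hC : ∀ e ∈ F, G.fst e ∈ C ↔ G.snd e ∈ C)
    (h : G.ReachIn F x y) (hx : x ∈ C) :
    y ∈ C ∧ G.ReachIn {e ∈ F | G.fst e ∈ C ∧ G.snd e ∈ C} x y := by
  induction h with
  | refl => exact ⟨hx, .refl x⟩
  | tail _ hstep ih =>
    obtain ⟨e, he, hends⟩ := hstep
    obtain ⟨hb, hxb⟩ := ih
    have hmem : G.fst e ∈ C ∧ G.snd e ∈ C := by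
      rcases hends with ⟨rfl, rfl⟩ | ⟨rfl, rfl⟩
      exacts [⟨hb, (hC e he).mp hb⟩, ⟨(hC e he).mpr hb, hb⟩]
    refine ⟨?_, hxb.tail ⟨e, ⟨he, hmem⟩, hends⟩⟩
    rcases hends with ⟨rfl, rfl⟩ | ⟨rfl, rfl⟩
    exacts [hmem.2, hmem.1]

end ReachIn

section Forest

variable {G : Multigraph V E} {F F' : Set E} {e : E} {x y : V}

lemma IsForest.mono (hF : G.IsForest F) (h : F' ⊆ F) : G.IsForest F' :=
  fun e he hr => hF e (h he) (hr.mono (Set.sdiff_subset_sdiff_left h))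

lemma IsForest.insert (hF : G.IsForest F) (he : ¬ G.ReachIn F (G.fst e) (G.snd e)) :
    G.IsForest (insert e F) := by
  rintro f (rfl | hfF) hr
  · exact he (hr.mono (by simp))
  have hfe : f ≠ e := by rintro rfl; exact he (reachIn_of_mem hfF)
  rw [← Set.insert_sdiff_singleton_comm hfe.symm] at hr
  have hf : G.ReachIn F (G.fst f) (G.snd f) := reachIn_of_mem hfF
  rcases hr.of_insert with h | ⟨h₁, h₂⟩ | ⟨h₁, h₂⟩
  · exact hF f hfF h
  · exact he (((h₁.mono Set.sdiff_subset).symm.trans hf).trans (h₂.mono Set.sdiff_subset).symm)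
  · exact he (((h₂.mono Set.sdiff_subset).trans hf.symm).trans (h₁.mono Set.sdiff_subset))

variable (G) in
def separatingEdges (F : Set E) (u v : V) : Set E :=
  {e ∈ F | ¬ G.ReachIn (F \ {e}) u v}

lemma ReachIn.separatingEdges [Finite E] (hF : G.IsForest F) (h : G.ReachIn F x y) :
    G.ReachIn (G.separatingEdges F x y) x y := by
  induction hn : F.ncard using Nat.strong_induction_on generalizing F with
  | _ n ih =>
  by_cases hall : ∀ e ∈ F, ¬ G.ReachIn (F \ {e}) x y
  · exact h.mono fun e he => ⟨he, hall e he⟩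
  push Not at hall
  obtain ⟨e, heF, hxy⟩ := hall
  have hlt : (F \ {e}).ncard < n := hn ▸ Set.ncard_sdiff_singleton_lt_of_mem heF
  refine (ih _ hlt (hF.mono Set.sdiff_subset) hxy rfl).mono ?_
  rintro f ⟨⟨hfF, hfe⟩, hf⟩
  refine ⟨hfF, fun hcon => ?_⟩
  rw [← Set.insert_sdiff_self_of_mem heF, ← Set.insert_sdiff_singleton_comm (Ne.symm hfe)] at hcon
  have hmono {a b : V} (h : G.ReachIn ((F \ {e}) \ {f}) a b) : G.ReachIn (F \ {e}) a b :=
    h.mono Set.sdiff_subset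
  rcases hcon.of_insert with hc | ⟨h₁, h₂⟩ | ⟨h₁, h₂⟩
  · exact hf hc
  · exact hF e heF (((hmono h₁).symm.trans hxy).trans (hmono h₂).symm)
  · exact hF e heF (((hmono h₂).trans hxy.symm).trans (hmono h₁))

end Forest

section Components

variable {G : Multigraph V E} {F F' : Set E} {e : E} {x y : V}

variable (G) in
def componentSetoid (F : Set E) : Setoid V :=
  ⟨G.ReachIn F, ⟨ReachIn.refl, ReachIn.symm, ReachIn.trans⟩⟩

variable (G) in
noncomputable def numComponents (F : Set E) : ℕ := Nat.card (Quotient (G.componentSetoid F))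

lemma component_eq_iff : (⟦x⟧ : Quotient (G.componentSetoid F)) = ⟦y⟧ ↔ G.ReachIn F x y :=
  Quotient.eq

lemma numComponents_empty : G.numComponents ∅ = Nat.card V :=
  (Nat.card_eq_of_bijective _ ⟨fun _ _ h => (component_eq_iff.mp h).eq_of_empty,
    Quotient.mk_surjective⟩).symm

lemma numComponents_eq_one [Nonempty V] (hF : G.Spans F) : G.numComponents F = 1 := by
  rw [numComponents, Nat.card_eq_one_iff_unique]
  exact ⟨⟨Quotient.ind₂ fun x y => component_eq_iff.mpr (hF x y)⟩, ⟨⟦Classical.arbitrary V⟧⟩⟩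

lemma one_le_numComponents [Finite V] [Nonempty V] : 1 ≤ G.numComponents F :=
  Nat.card_pos_iff.mpr ⟨⟨⟦Classical.arbitrary V⟧⟩, inferInstance⟩

lemma two_le_numComponents [Finite V] (h : ¬ G.ReachIn F x y) : 2 ≤ G.numComponents F :=
  have : Nontrivial (Quotient (G.componentSetoid F)) :=
    ⟨⟦x⟧, ⟦y⟧, fun hc => h (component_eq_iff.mp hc)⟩
  Finite.one_lt_card

/-- The components of `F` are those of `F \ {e}` other than the one of `snd e`. -/
lemma numComponents_sdiff_singleton [Finite V] (he : e ∈ F)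
    (hb : ¬ G.ReachIn (F \ {e}) (G.fst e) (G.snd e)) :
    G.numComponents (F \ {e}) = G.numComponents F + 1 := by
  classical
  set a : Quotient (G.componentSetoid (F \ {e})) := ⟦G.snd e⟧
  let toF : Quotient (G.componentSetoid (F \ {e})) → Quotient (G.componentSetoid F) :=
    Quotient.map id fun _ _ h => h.mono Set.sdiff_subset
  have hbij : Function.Bijective fun q : {q // q ≠ a} => toF q.1 := by
    constructor
    · rintro ⟨q₁, hq₁⟩ ⟨q₂, hq₂⟩ h
      induction q₁ using Quotient.inductionOn
      induction q₂ using Quotient.inductionOn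
      have h' := component_eq_iff.mp h
      rw [← Set.insert_sdiff_self_of_mem he] at h'
      rcases h'.of_insert with hc | ⟨-, h₂⟩ | ⟨h₁, -⟩
      · exact Subtype.ext (component_eq_iff.mpr hc)
      · exact absurd (component_eq_iff.mpr h₂.symm) hq₂
      · exact absurd (component_eq_iff.mpr h₁) hq₁
    · refine Quotient.ind fun v => ?_
      by_cases h : G.ReachIn (F \ {e}) v (G.snd e)
      · refine ⟨⟨⟦G.fst e⟧, fun hc => hb (component_eq_iff.mp hc)⟩, ?_⟩
        exact component_eq_iff.mpr ((reachIn_of_mem he).trans (h.mono Set.sdiff_subset).symm)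
      · exact ⟨⟨⟦v⟧, fun hc => h (component_eq_iff.mp hc)⟩, rfl⟩
  rw [numComponents, numComponents, ← Nat.card_eq_of_bijective _ hbij,
    ← Finite.card_option, Nat.card_congr (Equiv.optionSubtypeNe a)]

lemma IsForest.ncard_add_numComponents [Finite V] [Finite E] (hF : G.IsForest F) :
    F.ncard + G.numComponents F = Nat.card V := by
  induction hn : F.ncard using Nat.strong_induction_on generalizing F with
  | _ n ih =>
  rcases F.eq_empty_or_nonempty with rfl | ⟨e, he⟩
  · rw [← hn, Set.ncard_empty, numComponents_empty, zero_add]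
  · have hcard := Set.ncard_sdiff_singleton_add_one he
    have := ih _ (hn ▸ Set.ncard_sdiff_singleton_lt_of_mem he) (hF.mono Set.sdiff_subset) rfl
    rw [numComponents_sdiff_singleton he (hF e he)] at this
    omega

lemma IsForest.ncard_add_one_le [Finite V] [Finite E] [Nonempty V] (hF : G.IsForest F) :
    F.ncard + 1 ≤ Nat.card V :=
  hF.ncard_add_numComponents ▸ Nat.add_le_add_left one_le_numComponents _

lemma IsForest.ncard_add_one_eq [Finite V] [Finite E] [Nonempty V] (hF : G.IsForest F)
    (hs : G.Spans F) : F.ncard + 1 = Nat.card V :=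
  numComponents_eq_one hs ▸ hF.ncard_add_numComponents

lemma IsForest.ncard_add_two_le [Finite V] [Finite E] (hF : G.IsForest F)
    (hs : ¬ G.Spans F) : F.ncard + 2 ≤ Nat.card V := by
  obtain ⟨x, y, hxy⟩ : ∃ x y, ¬ G.ReachIn F x y := by simpa [Spans] using hs
  exact hF.ncard_add_numComponents ▸ Nat.add_le_add_left (two_le_numComponents hxy) _

lemma exists_isForest_subset [Finite E] (F : Set E) :
    ∃ F₀ ⊆ F, G.IsForest F₀ ∧ ∀ x y, G.ReachIn F x y → G.ReachIn F₀ x y := by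
  induction hn : F.ncard using Nat.strong_induction_on generalizing F with
  | _ n ih =>
  by_cases hF : G.IsForest F
  · exact ⟨F, subset_rfl, hF, fun _ _ => id⟩
  obtain ⟨e, he, hre⟩ : ∃ e ∈ F, G.ReachIn (F \ {e}) (G.fst e) (G.snd e) := by
    simpa [IsForest] using hF
  obtain ⟨F₀, hsub, hF₀, hreach⟩ :=
    ih _ (hn ▸ Set.ncard_sdiff_singleton_lt_of_mem he) (F \ {e}) rfl
  refine ⟨F₀, hsub.trans Set.sdiff_subset, hF₀, fun x y h => hreach x y ?_⟩
  refine h.of_forall_reachIn fun g hg => ?_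
  by_cases hge : g = e
  · exact hge ▸ hre
  · exact reachIn_of_mem ⟨hg, hge⟩

lemma isForest_of_spans [Finite V] [Finite E] [Nonempty V] (hs : G.Spans F)
    (hcard : F.ncard + 1 ≤ Nat.card V) : G.IsForest F := by
  obtain ⟨F₀, hsub, hF₀, hreach⟩ := exists_isForest_subset (G := G) F
  have := hF₀.ncard_add_one_eq fun x y => hreach x y (hs x y)
  exact Set.eq_of_subset_of_ncard_le hsub (by omega) ▸ hF₀

end Components

section Exchange

variable {G : Multigraph V E} {ι : Type*} {F F₀ F' : ι → Set E} {e : E}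

variable (G) in
def IsForestPacking (F : ι → Set E) : Prop :=
  (∀ i, G.IsForest (F i)) ∧ Pairwise (Disjoint on F)

noncomputable def totalCard [Fintype ι] (F : ι → Set E) : ℕ := ∑ i, (F i).ncard

lemma totalCard_add_ncard_of_forall_ne [Fintype ι] {i : ι} (h : ∀ j ≠ i, F' j = F j) :
    totalCard F' + (F i).ncard = totalCard F + (F' i).ncard := by
  classical
  simp only [totalCard, ← Finset.add_sum_erase _ _ (Finset.mem_univ i)]
  rw [Finset.sum_congr rfl fun j hj => by rw [h j (Finset.ne_of_mem_erase hj)]]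
  ring

lemma IsForestPacking.of_subset_insert (hF : G.IsForestPacking F) {i : ι} (he : ∀ j, e ∉ F j)
    (hsub : F' i ⊆ insert e (F i)) (hrest : ∀ j ≠ i, F' j = F j) (hi : G.IsForest (F' i)) :
    G.IsForestPacking F' := by
  have hdisj {j : ι} (hji : j ≠ i) : Disjoint (F' i) (F' j) := by
    rw [hrest j hji, Set.disjoint_left]
    intro g hg hgj
    rcases hsub hg with rfl | hgi
    exacts [he j hgj, Set.disjoint_left.mp (hF.2 hji.symm) hgi hgj]
  refine ⟨fun j => ?_, fun j j' hjj' => ?_⟩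
  · obtain rfl | hji := eq_or_ne j i
    exacts [hi, hrest j hji ▸ hF.1 j]
  obtain rfl | hji := eq_or_ne j i
  · exact hdisj hjj'.symm
  obtain rfl | hj'i := eq_or_ne j' i
  · exact (hdisj hji).symm
  · simpa only [onFun, hrest j hji, hrest j' hj'i] using hF.2 hjj'

variable (G) in
def Exchange (F F' : ι → Set E) : Prop :=
  G.IsForestPacking F ∧ ∃ i e e', (∀ j, e ∉ F j) ∧ e' ∈ F i ∧
    F' i = insert e (F i \ {e'}) ∧ (∀ j ≠ i, F' j = F j) ∧ G.IsForest (F' i)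

lemma Exchange.isForestPacking (h : G.Exchange F F') : G.IsForestPacking F' := by
  obtain ⟨hF, i, e, e', he, -, hi, hrest, hforest⟩ := h
  exact hF.of_subset_insert he (hi ▸ Set.insert_subset_insert Set.sdiff_subset) hrest hforest

lemma Exchange.totalCard_eq [Fintype ι] [Finite E] (h : G.Exchange F F') :
    totalCard F' = totalCard F := by
  obtain ⟨-, i, e, e', he, he', hi, hrest, -⟩ := h
  have := totalCard_add_ncard_of_forall_ne hrest
  rw [hi, Set.ncard_insert_of_notMem (fun h => he i h.1),
    Set.ncard_sdiff_singleton_add_one he'] at this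
  omega

lemma IsForestPacking.notMem_of_eq_insert_sdiff {e' : E} (hF : G.IsForestPacking F) {i : ι}
    (he : ∀ j, e ∉ F j) (he' : e' ∈ F i) (hi : F' i = insert e (F i \ {e'}))
    (hrest : ∀ j ≠ i, F' j = F j) (j : ι) : e' ∉ F' j := by
  obtain rfl | hji := eq_or_ne j i
  · rw [hi]
    rintro (rfl | h)
    exacts [he j he', h.2 rfl]
  · exact hrest j hji ▸ Set.disjoint_left.mp (hF.2 hji.symm) he'

instance : Std.Symm (G.Exchange (ι := ι)) where
  symm F F' h := by
    have hF' := h.isForestPacking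
    obtain ⟨hF, i, e, e', he, he', hi, hrest, -⟩ := h
    have hFi : F i = insert e' (F' i \ {e}) := by
      rw [hi, Set.insert_sdiff_self_of_notMem fun h => he i h.1, Set.insert_sdiff_self_of_mem he']
    exact ⟨hF', i, e', e, hF.notMem_of_eq_insert_sdiff he he' hi hrest,
      hi ▸ Set.mem_insert e _, hFi, fun j hj => (hrest j hj).symm, hF.1 i⟩

lemma reflTransGen_exchange_symm (h : ReflTransGen G.Exchange F F') :
    ReflTransGen G.Exchange F' F :=
  Std.Symm.symm _ _ h

lemma isForestPacking_of_reflTransGen_exchange (hF : G.IsForestPacking F)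
    (h : ReflTransGen G.Exchange F F') : G.IsForestPacking F' := by
  induction h with
  | refl => exact hF
  | tail _ h => exact h.isForestPacking

lemma totalCard_eq_of_reflTransGen_exchange [Fintype ι] [Finite E]
    (h : ReflTransGen G.Exchange F F') : totalCard F' = totalCard F := by
  induction h with
  | refl => rfl
  | tail _ h ih => rw [h.totalCard_eq, ih]

variable (G) in
def IsMaxForestPacking [Fintype ι] (F : ι → Set E) : Prop :=
  G.IsForestPacking F ∧ ∀ F' : ι → Set E, G.IsForestPacking F' → totalCard F' ≤ totalCard F

variable (G) in
def freeableEdges (F₀ : ι → Set E) : Set E :=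
  {e | ∃ F, ReflTransGen G.Exchange F₀ F ∧ ∀ i, e ∉ F i}

end Exchange

section FreeableEdges

variable {G : Multigraph V E} {ι : Type*} [Fintype ι] {F F₀ : ι → Set E} {e : E}

lemma IsMaxForestPacking.reachIn_of_free [Finite E] (hmax : G.IsMaxForestPacking F₀)
    (hF : ReflTransGen G.Exchange F₀ F) (he : ∀ j, e ∉ F j) (i : ι) :
    G.ReachIn (F i) (G.fst e) (G.snd e) := by
  classical
  have hpack := isForestPacking_of_reflTransGen_exchange hmax.1 hF
  by_contra hne
  have hbig : G.IsForestPacking (update F i (insert e (F i))) :=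
    hpack.of_subset_insert he (by simp) (fun j hj => update_of_ne hj _ _)
      (by simpa using (hpack.1 i).insert hne)
  have hcard := totalCard_add_ncard_of_forall_ne (F' := update F i (insert e (F i)))
    (fun j hj => update_of_ne hj _ _)
  rw [update_self, Set.ncard_insert_of_notMem (he i)] at hcard
  have := hmax.2 _ hbig
  have := totalCard_eq_of_reflTransGen_exchange hF
  omega

/-- Each edge separating the ends of `e` in a forest can be exchanged for `e`. -/
lemma IsMaxForestPacking.reachIn_inter_freeableEdges_of_free [Finite E]
    (hmax : G.IsMaxForestPacking F₀) (hF : ReflTransGen G.Exchange F₀ F) (he : ∀ j, e ∉ F j)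
    (i : ι) : G.ReachIn (F i ∩ G.freeableEdges F₀) (G.fst e) (G.snd e) := by
  classical
  have hpack := isForestPacking_of_reflTransGen_exchange hmax.1 hF
  refine ((hmax.reachIn_of_free hF he i).separatingEdges (hpack.1 i)).mono ?_
  rintro e' ⟨he'F, he'sep⟩
  have hex : G.Exchange F (update F i (insert e (F i \ {e'}))) :=
    ⟨hpack, i, e, e', he, he'F, by simp, fun j hj => update_of_ne hj _ _,
      by simpa using ((hpack.1 i).mono Set.sdiff_subset).insert he'sep⟩
  exact ⟨he'F, _, hF.tail hex,
    hpack.notMem_of_eq_insert_sdiff he he'F (by simp) fun j hj => update_of_ne hj _ _⟩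

/-- Induction along the exchanges leading from a packing in which `e` is free: an exchange only
removes an edge from a forest when that edge becomes free, hence freeable. -/
lemma IsMaxForestPacking.reachIn_inter_freeableEdges [Finite E]
    (hmax : G.IsMaxForestPacking F₀) (hF : ReflTransGen G.Exchange F₀ F)
    (he : e ∈ G.freeableEdges F₀) (i : ι) :
    G.ReachIn (F i ∩ G.freeableEdges F₀) (G.fst e) (G.snd e) := by
  obtain ⟨Fs, hFs, hfree⟩ := he
  have hpath : ReflTransGen G.Exchange Fs F := (reflTransGen_exchange_symm hFs).trans hF
  clear hF
  induction hpath generalizing i with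
  | refl => exact hmax.reachIn_inter_freeableEdges_of_free hFs hfree i
  | @tail b c hab hbc ih =>
    have hc : ReflTransGen G.Exchange F₀ c := (hFs.trans hab).tail hbc
    obtain ⟨hb, j, f, f', hf, hf', hcj, hrest, -⟩ := hbc
    obtain rfl | hij := eq_or_ne i j
    · refine (ih i).of_forall_reachIn ?_
      rintro g ⟨hg, hgD⟩
      obtain rfl | hgf' := eq_or_ne g f'
      · exact hmax.reachIn_inter_freeableEdges_of_free hc
          (hb.notMem_of_eq_insert_sdiff hf hf' hcj hrest) i
      · exact reachIn_of_mem ⟨hcj ▸ Set.mem_insert_of_mem _ ⟨hg, hgf'⟩, hgD⟩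
    · exact hrest i hij ▸ ih i

lemma IsMaxForestPacking.reachIn_inside_freeableComponent [Finite E]
    (hmax : G.IsMaxForestPacking F₀) (i : ι) {a u v : V} (hu : G.ReachIn (G.freeableEdges F₀) a u)
    (hv : G.ReachIn (G.freeableEdges F₀) a v) :
    G.ReachIn {e ∈ F₀ i | G.ReachIn (G.freeableEdges F₀) a (G.fst e) ∧
      G.ReachIn (G.freeableEdges F₀) a (G.snd e)} u v := by
  have huv : G.ReachIn (F₀ i ∩ G.freeableEdges F₀) u v := (hu.symm.trans hv).of_forall_reachIn
    fun e he => hmax.reachIn_inter_freeableEdges .refl he i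
  refine ((huv.restrict (fun e he => ?_) hu).2).mono fun e he => ⟨he.1.1, he.2⟩
  exact ⟨fun h => h.trans (reachIn_of_mem he.2), fun h => h.trans (reachIn_of_mem he.2).symm⟩

end FreeableEdges

section Counting

variable {G : Multigraph V E}

lemma ncard_cut_singleton [Finite E] (v : V) :
    (G.cut {v}).ncard = {e | G.fst e ≠ G.snd e ∧ G.fst e = v}.ncard +
      {e | G.fst e ≠ G.snd e ∧ G.snd e = v}.ncard := by
  rw [← Set.ncard_union_eq]
  · congr 1
    ext e
    simp only [cut, Set.mem_singleton_iff, Set.mem_ofPred_eq, Set.mem_union]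
    grind
  · rw [Set.disjoint_left]
    grind

lemma sum_ncard_cut_singleton [Fintype V] [Finite E] :
    ∑ v, (G.cut {v}).ncard = 2 * {e | G.fst e ≠ G.snd e}.ncard := by
  classical
  have := Fintype.ofFinite E
  have hfiber (f : E → V) :
      ∑ v, {e | G.fst e ≠ G.snd e ∧ f e = v}.ncard = {e | G.fst e ≠ G.snd e}.ncard := by
    simp only [Set.ncard_eq_toFinset_card', Set.toFinset_ofPred]
    rw [Finset.card_eq_sum_card_fiberwise (f := f) (t := Finset.univ) (by simp)]
    simp [Finset.filter_filter]
  simp only [ncard_cut_singleton, Finset.sum_add_distrib, hfiber]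
  ring

lemma mul_card_le_ncard_nonloops [Finite V] [Finite E] [Nontrivial V] {m : ℕ}
    (hG : G.EdgeConnected (2 * m)) : m * Nat.card V ≤ {e | G.fst e ≠ G.snd e}.ncard := by
  have := Fintype.ofFinite V
  have hsum : ∑ _v : V, 2 * m ≤ ∑ v, (G.cut {v}).ncard := Finset.sum_le_sum fun v _ =>
    hG {v} (Set.singleton_nonempty v) (Set.nonempty_compl_of_nontrivial v)
  rw [sum_ncard_cut_singleton, Finset.sum_const, Finset.card_univ, smul_eq_mul,
    ← Nat.card_eq_fintype_card] at hsum
  linarith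

lemma isForestPacking_empty {ι : Type*} : G.IsForestPacking fun _ : ι => (∅ : Set E) :=
  ⟨fun _ _ he => absurd he (Set.notMem_empty _), fun _ _ _ => Set.disjoint_empty _⟩

variable {ι : Type*} [Fintype ι] {F₀ : ι → Set E}

lemma exists_isMaxForestPacking [Finite E] : ∃ F₀ : ι → Set E, G.IsMaxForestPacking F₀ := by
  obtain ⟨F₀, hF₀, hmax⟩ := Set.exists_max_image {F : ι → Set E | G.IsForestPacking F}
    totalCard (Set.toFinite _) ⟨_, isForestPacking_empty⟩
  exact ⟨F₀, hF₀, hmax⟩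

/-- The forests have fewer than `card ι * (|V| - 1)` edges in total, while
`2 card ι`-edge-connectivity forces at least `card ι * |V|` non-loop edges. -/
lemma IsMaxForestPacking.exists_free_of_not_spans [Finite V] [Finite E]
    (hmax : G.IsMaxForestPacking F₀) (hG : G.EdgeConnected (2 * Fintype.card ι)) {i : ι}
    (hi : ¬ G.Spans (F₀ i)) : ∃ e, G.fst e ≠ G.snd e ∧ ∀ j, e ∉ F₀ j := by
  obtain ⟨x, y, hxy⟩ : ∃ x y, ¬ G.ReachIn (F₀ i) x y := by simpa [Spans] using hi
  have : Nontrivial V := ⟨x, y, fun h => hxy (.of_eq h)⟩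
  have htotal : totalCard F₀ + Fintype.card ι < Fintype.card ι * Nat.card V := by
    have := Finset.sum_lt_sum (s := Finset.univ) (fun j _ => (hmax.1.1 j).ncard_add_one_le)
      ⟨i, Finset.mem_univ i, (hmax.1.1 i).ncard_add_two_le hi⟩
    simpa [totalCard, Finset.sum_add_distrib, mul_comm] using this
  have hunion : (⋃ j, F₀ j).ncard < {e | G.fst e ≠ G.snd e}.ncard :=
    ((Set.ncard_iUnion_le_of_fintype F₀).trans_lt (show totalCard F₀ < _ by omega)).trans_le
      (mul_card_le_ncard_nonloops hG)
  obtain ⟨e, he, hfree⟩ := Set.exists_mem_notMem_of_ncard_lt_ncard hunion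
  exact ⟨e, he, fun j hj => hfree (Set.mem_iUnion_of_mem j hj)⟩

end Counting

section Contraction

variable {G : Multigraph V E}

variable (U : Set V)

open Classical in
noncomputable def contractMap (v : V) : Option ↥Uᶜ := if h : v ∈ U then none else some ⟨v, h⟩

variable (G) in
/-- `U` becomes the vertex `none`. -/
noncomputable def contract : Multigraph (Option ↥Uᶜ) {e : E // ¬ (G.fst e ∈ U ∧ G.snd e ∈ U)} :=
  ⟨fun e => contractMap U (G.fst e.1), fun e => contractMap U (G.snd e.1)⟩

variable {U}

lemma contractMap_eq_iff {a b : V} :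
    contractMap U a = contractMap U b ↔ a = b ∨ a ∈ U ∧ b ∈ U := by
  unfold contractMap
  split_ifs <;> simp_all [Subtype.ext_iff] <;> rintro rfl <;> contradiction

lemma contractMap_surjective (hU : U.Nonempty) : Function.Surjective (contractMap U) := by
  rintro (_ | ⟨v, hv⟩)
  · exact ⟨hU.some, dif_pos hU.some_mem⟩
  · exact ⟨v, dif_neg hv⟩

lemma card_option_compl_add_ncard [Finite V] :
    Nat.card (Option ↥Uᶜ) + U.ncard = Nat.card V + 1 := by
  rw [Finite.card_option, Nat.card_coe_set_eq, add_right_comm, Set.ncard_compl_add_ncard]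

lemma cut_preimage_contractMap (X : Set (Option ↥Uᶜ)) :
    G.cut (contractMap U ⁻¹' X) = Subtype.val '' (G.contract U).cut X := by
  ext e
  refine ⟨fun he => ⟨⟨e, fun hU => ?_⟩, he, rfl⟩, fun ⟨e', he', hee'⟩ => hee' ▸ he'⟩
  have := contractMap_eq_iff.mpr (Or.inr hU)
  simp only [cut, Set.mem_preimage, Set.mem_ofPred_eq, this] at he
  tauto

lemma EdgeConnected.contract {k : ℕ} (hG : G.EdgeConnected k) (hU : U.Nonempty) :
    (G.contract U).EdgeConnected k := by
  intro X ⟨x, hx⟩ ⟨y, hy⟩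
  obtain ⟨a, rfl⟩ := contractMap_surjective hU x
  obtain ⟨b, rfl⟩ := contractMap_surjective hU y
  have := hG (contractMap U ⁻¹' X) ⟨a, hx⟩ ⟨b, hy⟩
  rwa [cut_preimage_contractMap, Set.ncard_image_of_injective _ Subtype.val_injective] at this

variable {T : Set {e : E // ¬ (G.fst e ∈ U ∧ G.snd e ∈ U)}} {W : Set E}

lemma spans_image_union (hU : U.Nonempty) (hT : (G.contract U).Spans T)
    (hW : ∀ u ∈ U, ∀ v ∈ U, G.ReachIn W u v) : G.Spans (Subtype.val '' T ∪ W) := by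
  have hsame {a b : V} (h : contractMap U a = contractMap U b) :
      G.ReachIn (Subtype.val '' T ∪ W) a b := by
    rcases contractMap_eq_iff.mp h with rfl | ⟨ha, hb⟩
    exacts [.refl a, (hW a ha b hb).mono Set.subset_union_right]
  set σ := Function.surjInv (contractMap_surjective hU)
  have hσ (v : V) : contractMap U (σ (contractMap U v)) = contractMap U v :=
    Function.surjInv_eq _ _
  intro x y
  refine (hsame (hσ x).symm).trans (.trans ?_ (hsame (hσ y)))
  refine ReflTransGen.lift' σ (fun a b ⟨e, he, hab⟩ => ?_) _ _ (hT _ _)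
  have hedge : G.ReachIn (Subtype.val '' T ∪ W) (G.fst e.1) (G.snd e.1) :=
    reachIn_of_mem (Or.inl ⟨e, he, rfl⟩)
  have hσ' (c : Option ↥Uᶜ) : contractMap U (σ c) = c := Function.surjInv_eq _ _
  rcases hab with ⟨rfl, rfl⟩ | ⟨rfl, rfl⟩
  · exact (hsame (hσ' _)).trans (hedge.trans (hsame (hσ' _).symm))
  · exact (hsame (hσ' _)).trans (hedge.symm.trans (hsame (hσ' _).symm))

lemma numComponents_eq_card_option_compl (hU : U.Nonempty)
    (hWU : ∀ e ∈ W, G.fst e ∈ U ∧ G.snd e ∈ U) (hW : ∀ u ∈ U, ∀ v ∈ U, G.ReachIn W u v) :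
    G.numComponents W = Nat.card (Option ↥Uᶜ) := by
  have hresp (a b : V) (h : G.ReachIn W a b) : contractMap U a = contractMap U b := by
    induction h with
    | refl => rfl
    | tail _ hstep ih =>
      obtain ⟨e, he, hends⟩ := hstep
      have := contractMap_eq_iff.mpr (Or.inr (hWU e he))
      rcases hends with ⟨rfl, rfl⟩ | ⟨rfl, rfl⟩
      exacts [ih.trans this, ih.trans this.symm]
  refine Nat.card_eq_of_bijective (Quotient.lift _ hresp) ⟨?_, ?_⟩
  · refine Quotient.ind₂ fun a b h => component_eq_iff.mpr ?_
    rcases contractMap_eq_iff.mp h with rfl | ⟨ha, hb⟩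
    exacts [.refl a, hW a ha b hb]
  · exact fun x => (contractMap_surjective hU x).elim fun a ha => ⟨⟦a⟧, ha⟩

/-- The union spans and has at most `|V| - 1` edges. -/
lemma IsForest.image_union [Finite V] [Finite E] (hU : U.Nonempty)
    (hT : (G.contract U).IsForest T) (hTs : (G.contract U).Spans T) (hW : G.IsForest W)
    (hWU : ∀ e ∈ W, G.fst e ∈ U ∧ G.snd e ∈ U) (hWs : ∀ u ∈ U, ∀ v ∈ U, G.ReachIn W u v) :
    G.IsForest (Subtype.val '' T ∪ W) := by
  have : Nonempty V := hU.to_subtype.map Subtype.val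
  have hTcard := hT.ncard_add_one_eq hTs
  have hWcard := hW.ncard_add_numComponents
  rw [numComponents_eq_card_option_compl hU hWU hWs] at hWcard
  refine isForest_of_spans (spans_image_union hU hTs hWs) ?_
  have := Set.ncard_union_le (Subtype.val '' T) W
  rw [Set.ncard_image_of_injective _ Subtype.val_injective] at this
  omega

end Contraction

section TreePacking

variable {G : Multigraph V E}

theorem exists_spanning_forest_packing [Finite V] [Finite E] {ι : Type*} [Fintype ι]
    (hG : G.EdgeConnected (2 * Fintype.card ι)) :
    ∃ F : ι → Set E, G.IsForestPacking F ∧ ∀ i, G.Spans (F i) := by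
  induction hn : Nat.card V using Nat.strong_induction_on generalizing V E with
  | _ n ih =>
  obtain ⟨F₀, hmax⟩ := exists_isMaxForestPacking (G := G) (ι := ι)
  by_cases hall : ∀ i, G.Spans (F₀ i)
  · exact ⟨F₀, hmax.1, hall⟩
  push Not at hall
  obtain ⟨e₀, hloop, hfree⟩ := hmax.exists_free_of_not_spans hG hall.choose_spec
  set D := G.freeableEdges F₀
  set U := {v | G.ReachIn D (G.fst e₀) v}
  have hUne : U.Nonempty := ⟨_, .refl _⟩
  set W : ι → Set E := fun i => {e ∈ F₀ i | G.fst e ∈ U ∧ G.snd e ∈ U}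
  have hW (i : ι) (u : V) (hu : u ∈ U) (v : V) (hv : v ∈ U) : G.ReachIn (W i) u v :=
    hmax.reachIn_inside_freeableComponent i hu hv
  have hcard : Nat.card (Option ↥Uᶜ) < n := by
    have h2 : 1 < U.ncard := (Set.one_lt_ncard (Set.toFinite U)).mpr
      ⟨_, .refl _, _, reachIn_of_mem (show e₀ ∈ D from ⟨F₀, .refl, hfree⟩), hloop⟩
    have := card_option_compl_add_ncard (U := U)
    omega
  obtain ⟨T, hT, hTs⟩ := ih _ hcard (G := G.contract U) (hG.contract hUne) rfl
  have hWU (i : ι) : ∀ e ∈ W i, G.fst e ∈ U ∧ G.snd e ∈ U := fun _ he => he.2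
  have hTW (i j : ι) : Disjoint (Subtype.val '' T i) (W j) :=
    Set.disjoint_left.mpr fun _ ⟨e, _, he⟩ hW => e.2 (he ▸ hW.2)
  refine ⟨fun i => Subtype.val '' T i ∪ W i,
    ⟨fun i => (hT.1 i).image_union hUne (hTs i) ((hmax.1.1 i).mono fun _ h => h.1) (hWU i) (hW i),
      fun i j hij => ?_⟩, fun i => spans_image_union hUne (hTs i) (hW i)⟩
  refine Disjoint.union_left (Disjoint.union_right ?_ (hTW i j))
    (Disjoint.union_right (hTW j i).symm ?_)
  · exact (Set.disjoint_image_iff Subtype.val_injective).mpr (hT.2 hij)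
  · exact (hmax.1.2 hij).mono (fun _ h => h.1) fun _ h => h.1

end TreePacking

section Walks

variable {G : Multigraph V E} {F : Set E} {x y : V}

lemma isWalk_nil (x : V) : G.IsWalk x x [] := ⟨List.isChain_nil, Or.inl ⟨rfl, rfl⟩⟩

lemma isWalk_cons_iff {s : E × Bool} {l : List (E × Bool)} :
    G.IsWalk x y (s :: l) ↔ G.src s = x ∧ G.IsWalk (G.dst s) y l := by
  constructor
  · rintro ⟨hch, ⟨h, -⟩ | ⟨s', t, hh, hl, rfl, hdst⟩⟩
    · exact absurd h (List.cons_ne_nil s l)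
    obtain rfl : s = s' := Option.some_inj.mp hh
    refine ⟨rfl, ?_⟩
    cases l with
    | nil =>
      obtain rfl : s = t := Option.some_inj.mp hl
      exact ⟨List.isChain_nil, Or.inl ⟨rfl, hdst⟩⟩
    | cons a l =>
      obtain ⟨hsa, hch⟩ := List.isChain_cons_cons.mp hch
      exact ⟨hch, Or.inr ⟨a, t, rfl, List.getLast?_cons_cons ▸ hl, hsa.symm, hdst⟩⟩
  · rintro ⟨rfl, hch, ⟨rfl, rfl⟩ | ⟨a, t, hh, hl, hsrc, hdst⟩⟩
    · exact ⟨List.isChain_singleton s, Or.inr ⟨s, s, rfl, rfl, rfl, rfl⟩⟩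
    cases l with
    | nil => simp at hh
    | cons a' l =>
      obtain rfl : a' = a := Option.some_inj.mp hh
      exact ⟨List.isChain_cons_cons.mpr ⟨hsrc.symm, hch⟩,
        Or.inr ⟨s, t, rfl, by rwa [List.getLast?_cons_cons], rfl, hdst⟩⟩

lemma adjIn_src_dst {s : E × Bool} (hs : s.1 ∈ F) : G.AdjIn F (G.src s) (G.dst s) := by
  obtain ⟨e, _ | _⟩ := s
  exacts [⟨e, hs, Or.inr ⟨rfl, rfl⟩⟩, ⟨e, hs, Or.inl ⟨rfl, rfl⟩⟩]

lemma AdjIn.exists_step (h : G.AdjIn F x y) : ∃ s, s.1 ∈ F ∧ G.src s = x ∧ G.dst s = y := by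
  obtain ⟨e, he, ⟨rfl, rfl⟩ | ⟨rfl, rfl⟩⟩ := h
  exacts [⟨(e, true), he, rfl, rfl⟩, ⟨(e, false), he, rfl, rfl⟩]

lemma ReachIn.exists_isWalk (h : G.ReachIn F x y) :
    ∃ l, G.IsWalk x y l ∧ ∀ s ∈ l, s.1 ∈ F := by
  induction h using ReflTransGen.head_induction_on with
  | refl => exact ⟨[], isWalk_nil _, by simp⟩
  | head hstep _ ih =>
    obtain ⟨l, hl, hlF⟩ := ih
    obtain ⟨s, hs, rfl, rfl⟩ := hstep.exists_step
    exact ⟨s :: l, isWalk_cons_iff.mpr ⟨rfl, hl⟩, by simpa [hs] using hlF⟩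

lemma IsWalk.reachIn {l : List (E × Bool)} (h : G.IsWalk x y l) (hF : ∀ s ∈ l, s.1 ∈ F) :
    G.ReachIn F x y := by
  induction l generalizing x with
  | nil =>
    rcases h.2 with ⟨-, rfl⟩ | ⟨_, _, hh, -⟩
    exacts [.refl x, by simp at hh]
  | cons s l ih =>
    obtain ⟨rfl, hl⟩ := isWalk_cons_iff.mp h
    exact ReflTransGen.head (adjIn_src_dst (hF s (List.mem_cons_self ..)))
      (ih hl fun t ht => hF t (List.mem_cons_of_mem s ht))

/-- A closed trail through `e` would join the ends of `e` in `T - e`. -/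
lemma IsForest.isSpanningTree {T : Set E} (hT : G.IsForest T) (hs : G.Spans T) :
    G.IsSpanningTree T := by
  refine ⟨fun x y => (hs x y).exists_isWalk, ?_⟩
  rintro v (_ | ⟨⟨e, b⟩, l⟩) hne ⟨hw, hnd⟩ hmem
  · exact hne rfl
  obtain ⟨hsrc, hl⟩ := isWalk_cons_iff.mp hw
  have he : e ∉ l.map Prod.fst := (List.nodup_cons.mp hnd).1
  have hreach : G.ReachIn (T \ {e}) (G.dst (e, b)) (G.src (e, b)) := hsrc ▸ hl.reachIn
    fun t ht => ⟨hmem t (List.mem_cons_of_mem _ ht), fun h => he (h ▸ List.mem_map_of_mem ht)⟩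
  cases b
  exacts [hT e (hmem _ List.mem_cons_self) hreach, hT e (hmem _ List.mem_cons_self) hreach.symm]

end Walks

section Orientation

variable {G : Multigraph V E} {T : Set E} {o : E → Bool} {e : E} {r x y z : V}

lemma isDiWalk_nil (x : V) : G.IsDiWalk o x x [] := ⟨List.isChain_nil, Or.inl ⟨rfl, rfl⟩⟩

lemma isDiWalk_singleton (h₁ : G.tailO o e = x) (h₂ : G.headO o e = y) :
    G.IsDiWalk o x y [e] :=
  ⟨List.isChain_singleton e, Or.inr ⟨e, e, rfl, rfl, h₁, h₂⟩⟩

lemma IsDiWalk.append {l₁ l₂ : List E} (h₁ : G.IsDiWalk o x y l₁) (h₂ : G.IsDiWalk o y z l₂) :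
    G.IsDiWalk o x z (l₁ ++ l₂) := by
  obtain ⟨hc₁, ⟨rfl, rfl⟩ | ⟨e₁, f₁, hh₁, hl₁, ht₁, hd₁⟩⟩ := h₁
  · simpa using h₂
  obtain ⟨hc₂, ⟨rfl, rfl⟩ | ⟨e₂, f₂, hh₂, hl₂, ht₂, hd₂⟩⟩ := h₂
  · simpa using ⟨hc₁, Or.inr ⟨e₁, f₁, hh₁, hl₁, ht₁, hd₁⟩⟩
  have hne₁ : l₁ ≠ [] := by rintro rfl; simp at hh₁
  have hne₂ : l₂ ≠ [] := by rintro rfl; simp at hh₂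
  refine ⟨List.isChain_append.mpr ⟨hc₁, hc₂, ?_⟩, Or.inr ⟨e₁, f₂, ?_, ?_, ht₁, hd₂⟩⟩
  · rintro a ha b hb
    rw [hl₁, Option.mem_some_iff] at ha
    rw [hh₂, Option.mem_some_iff] at hb
    rw [← ha, ← hb, hd₁, ht₂]
  · rwa [List.head?_append_of_ne_nil _ hne₁]
  · rwa [List.getLast?_append_of_ne_nil _ hne₂]

lemma tailO_not : G.tailO (fun e => !o e) e = G.headO o e := by
  unfold tailO headO; cases h : o e <;> simp [h]

lemma headO_not : G.headO (fun e => !o e) e = G.tailO o e := by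
  unfold tailO headO; cases h : o e <;> simp [h]

lemma IsDiWalk.reverse {l : List E} (h : G.IsDiWalk (fun e => !o e) x y l) :
    G.IsDiWalk o y x l.reverse := by
  obtain ⟨hc, ⟨rfl, rfl⟩ | ⟨e, f, hh, hl, ht, hd⟩⟩ := h
  · exact isDiWalk_nil x
  refine ⟨List.isChain_reverse.mpr (hc.imp fun a b hab => ?_),
    Or.inr ⟨f, e, by rwa [List.head?_reverse], by rwa [List.getLast?_reverse], ?_, ?_⟩⟩
  · simpa only [flip, tailO_not, headO_not] using hab.symm
  · rwa [← headO_not]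
  · rwa [← tailO_not]

lemma tailO_headO_of_ends {p q : V} (h : G.fst e = p ∧ G.snd e = q ∨ G.fst e = q ∧ G.snd e = p) :
    G.tailO o e = p ∧ G.headO o e = q ∨ G.tailO o e = q ∧ G.headO o e = p := by
  unfold tailO headO
  cases o e <;> simp only [Bool.false_eq_true, if_true, if_false] <;> tauto

/-- Induction on the number of edges separating `w` from `r`: the last edge of a path from `r`
to `w` through such edges enters `w` from a vertex separated from `r` by fewer edges. -/
lemma IsForest.exists_isDiWalk_from [Finite E] (hT : G.IsForest T) (hs : G.Spans T)
    (ho : ∀ e ∈ T, G.ReachIn (T \ {e}) r (G.tailO o e)) (w : V) :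
    ∃ l, G.IsDiWalk o r w l ∧ l.Nodup ∧ ∀ e ∈ l, e ∈ G.separatingEdges T r w := by
  induction hn : (G.separatingEdges T r w).ncard using Nat.strong_induction_on
    generalizing w with
  | _ n ih =>
  obtain rfl | hwr := eq_or_ne w r
  · exact ⟨[], isDiWalk_nil w, List.nodup_nil, by simp⟩
  obtain rfl | ⟨p, -, e, ⟨heT, hesep⟩, hends⟩ :=
    ReflTransGen.cases_tail ((hs r w).separatingEdges hT)
  · exact absurd rfl hwr
  obtain ⟨htail, hhead⟩ : G.tailO o e = p ∧ G.headO o e = w := by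
    rcases tailO_headO_of_ends (o := o) hends with h | ⟨htail, -⟩
    · exact h
    · exact absurd (htail ▸ ho e heT) hesep
  have hrp : G.ReachIn (T \ {e}) r p := htail ▸ ho e heT
  have hsub : G.separatingEdges T r p ⊆ G.separatingEdges T r w := by
    refine fun e' ⟨he'T, he'sep⟩ => ⟨he'T, fun hrw => he'sep ?_⟩
    obtain rfl | he'e := eq_or_ne e' e
    · exact hrp
    have hpw : G.ReachIn (T \ {e'}) p w :=
      ReflTransGen.single ⟨e, ⟨heT, fun h => he'e h.symm⟩, hends⟩
    exact hrw.trans hpw.symm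
  have hep : e ∉ G.separatingEdges T r p := fun h => h.2 hrp
  obtain ⟨l, hl, hnd, hlsep⟩ := ih _ (hn ▸ Set.ncard_lt_ncard
    (Set.ssubset_iff_of_subset hsub |>.mpr ⟨e, ⟨heT, hesep⟩, hep⟩)) p rfl
  refine ⟨l ++ [e], hl.append (isDiWalk_singleton htail hhead), ?_, ?_⟩
  · exact hnd.append (List.nodup_singleton e) (List.disjoint_singleton.mpr fun h => hep (hlsep e h))
  · simpa [or_imp, forall_and] using ⟨fun e' he' => hsub (hlsep e' he'), heT, hesep⟩

lemma IsForest.exists_isDiWalk_to [Finite E] (hT : G.IsForest T) (hs : G.Spans T)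
    (ho : ∀ e ∈ T, G.ReachIn (T \ {e}) r (G.headO o e)) (w : V) :
    ∃ l, G.IsDiWalk o w r l ∧ l.Nodup ∧ ∀ e ∈ l, e ∈ T := by
  obtain ⟨l, hl, hnd, hlT⟩ :=
    hT.exists_isDiWalk_from hs (o := fun e => !o e) (fun e he => tailO_not ▸ ho e he) w
  exact ⟨l.reverse, hl.reverse, List.nodup_reverse.mpr hnd,
    fun e he => (hlT e (List.mem_reverse.mp he)).1⟩

end Orientation

section RootedOrientation

variable {G : Multigraph V E} {T : Set E} {o : E → Bool} {e : E} {r : V}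

variable (G) in
open Classical in
/-- `fst e` is the tail of `e` iff it lies on the side of `r` in `T - e`. -/
noncomputable def orientAway (T : Set E) (r : V) (e : E) : Bool :=
  decide (G.ReachIn (T \ {e}) r (G.fst e))

lemma reachIn_tailO_of_eq_orientAway (hs : G.Spans T) (he : e ∈ T)
    (ho : o e = G.orientAway T r e) : G.ReachIn (T \ {e}) r (G.tailO o e) := by
  by_cases h : G.ReachIn (T \ {e}) r (G.fst e)
  · simp [tailO, ho, orientAway, h]
  · simpa [tailO, ho, orientAway, h] using (hs r _).sdiff_singleton_snd he h

lemma reachIn_headO_of_eq_not_orientAway (hs : G.Spans T) (he : e ∈ T)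
    (ho : o e = !G.orientAway T r e) : G.ReachIn (T \ {e}) r (G.headO o e) :=
  tailO_not (o := o) ▸ reachIn_tailO_of_eq_orientAway hs he (by simp [ho])

lemma exists_eq_of_pairwise_disjoint {ι α β : Type*} [Nonempty β] {F : ι → Set α}
    (hF : Pairwise (Disjoint on F)) (f : ι → α → β) :
    ∃ g : α → β, ∀ i, ∀ a ∈ F i, g a = f i a := by
  classical
  refine ⟨fun a => if h : ∃ i, a ∈ F i then f h.choose a else Classical.arbitrary β,
    fun i a ha => ?_⟩
  have h : ∃ i, a ∈ F i := ⟨i, ha⟩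
  obtain rfl : h.choose = i := by
    by_contra hne
    exact Set.disjoint_left.mp (hF hne) h.choose_spec ha
  simp [h]

lemma exists_isDiWalk_via_root [Finite E] {T₁ T₂ : Set E} (hT₁ : G.IsForest T₁)
    (hs₁ : G.Spans T₁) (hT₂ : G.IsForest T₂) (hs₂ : G.Spans T₂) (hdisj : Disjoint T₁ T₂)
    (ho₁ : ∀ e ∈ T₁, G.ReachIn (T₁ \ {e}) r (G.headO o e))
    (ho₂ : ∀ e ∈ T₂, G.ReachIn (T₂ \ {e}) r (G.tailO o e)) (v w : V) :
    ∃ l, G.IsDiWalk o v w l ∧ l.Nodup ∧ ∀ e ∈ l, e ∈ T₁ ∪ T₂ := by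
  obtain ⟨l₁, hl₁, hnd₁, hlT₁⟩ := hT₁.exists_isDiWalk_to hs₁ ho₁ v
  obtain ⟨l₂, hl₂, hnd₂, hlT₂⟩ := hT₂.exists_isDiWalk_from hs₂ ho₂ w
  refine ⟨l₁ ++ l₂, hl₁.append hl₂, hnd₁.append hnd₂ fun e h₁ h₂ => ?_, fun e he => ?_⟩
  · exact Set.disjoint_left.mp hdisj (hlT₁ e h₁) (hlT₂ e h₂).1
  · rcases List.mem_append.mp he with h | h
    exacts [Or.inl (hlT₁ e h), Or.inr (hlT₂ e h).1]

theorem exists_orientation_diConnAtLeast [Finite E] {k : ℕ} {F : Fin (2 * k) → Set E}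
    (hF : G.IsForestPacking F) (hs : ∀ i, G.Spans (F i)) :
    ∃ o : E → Bool, ∀ v w : V, G.DiConnAtLeast o v w k := by
  cases isEmpty_or_nonempty V with
  | inl hV => exact ⟨fun _ => true, fun v => isEmptyElim v⟩
  | inr hV =>
  obtain ⟨r⟩ := hV
  let toward (i : Fin k) : Fin (2 * k) := ⟨k + i, by omega⟩
  let away (i : Fin k) : Fin (2 * k) := ⟨i, by omega⟩
  obtain ⟨o, ho⟩ := exists_eq_of_pairwise_disjoint hF.2 fun i =>
    if i.1 < k then G.orientAway (F i) r else fun e => !G.orientAway (F i) r e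
  have hdisj {a b : Fin (2 * k)} (h : a.1 ≠ b.1) : Disjoint (F a) (F b) :=
    hF.2 fun hab => h (congrArg Fin.val hab)
  refine ⟨o, fun v w => ?_⟩
  have hpath (i : Fin k) :
      ∃ l, G.IsDiWalk o v w l ∧ l.Nodup ∧ ∀ e ∈ l, e ∈ F (toward i) ∪ F (away i) := by
    refine exists_isDiWalk_via_root (r := r) (hF.1 _) (hs _) (hF.1 _) (hs _) (hdisj ?_)
      (fun e he => reachIn_headO_of_eq_not_orientAway (hs _) he ?_)
      (fun e he => reachIn_tailO_of_eq_orientAway (hs _) he ?_) v w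
    · simp only [toward, away]
      omega
    · simpa [toward] using ho _ e he
    · simpa [away] using ho _ e he
  choose g hg using hpath
  refine ⟨g, fun i => ⟨(hg i).1, (hg i).2.1⟩, fun i j hij e hi hj => ?_⟩
  have hij' : i.1 ≠ j.1 := Fin.val_ne_of_ne hij
  rcases (hg i).2.2 e hi with hi | hi <;> rcases (hg j).2.2 e hj with hj | hj
  all_goals
    refine Set.disjoint_left.mp (hdisj ?_) hi hj
    simp only [toward, away]
    omega

end RootedOrientation

end NW.Multigraph

open NW in
/-- Every finite 4k-edge-connected multigraph has 2k pairwise edge-disjoint spanning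
trees, and consequently a k-arc-connected orientation. -/
theorem stmt15 {V E : Type} [Finite V] [Finite E] (G : Multigraph V E)
    (k : ℕ) (hconn : G.EdgeConnected (4 * k)) :
    (∃ T : Fin (2 * k) → Set E, (∀ i, G.IsSpanningTree (T i)) ∧
      ∀ i j, i ≠ j → Disjoint (T i) (T j)) ∧
    ∃ o : E → Bool, ∀ v w : V, v ≠ w → G.DiConnAtLeast o v w k := by
  obtain ⟨F, hF, hs⟩ := exists_spanning_forest_packing (G := G) (ι := Fin (2 * k))
    (by rwa [Fintype.card_fin, ← mul_assoc])
  exact ⟨⟨F, fun i => (hF.1 i).isSpanningTree (hs i), fun i j hij => hF.2 hij⟩,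
    (exists_orientation_diConnAtLeast hF hs).imp fun o ho v w _ => ho v w⟩
end

section
/- Every connected multigraph (finite or infinite) that is 2-edge-connected admits a strongly connected orientation, i.e. an orientation in which from every vertex to every other vertex there is a directed path. -/
open NW NW.Multigraph

/-! Egyed's theorem via Zorn's lemma. Call a set of arcs (edges with a chosen direction) a
cyclic orientation if it orients each edge at most once and every arc lies on a directed closed
walk. This property passes to unions of chains, so there is a maximal one. If some edge `e` were
left unoriented, then, `e` not being a bridge, it closes up with an `e`-avoiding path into a closed
trail; orienting the still unoriented edges of that trail along it keeps the orientation cyclic,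
because an already oriented edge can be traversed backwards along its directed cycle. Hence the
maximal one orients every edge, and in a connected graph an orientation in which every arc lies on
a directed cycle is strongly connected. -/

namespace NW.Multigraph

variable {V E : Type} {G : Multigraph V E}

lemma dst_eq_src_of_fst_eq_of_snd_ne {s t : E × Bool} (h₁ : t.1 = s.1) (h₂ : t.2 ≠ s.2) :
    G.dst t = G.src s := by
  obtain ⟨e, b⟩ := s
  obtain ⟨_, c⟩ := t
  subst h₁
  cases b <;> cases c <;> simp_all [src, dst]

variable (G) in
inductive StepWalk : V → V → List (E × Bool) → Prop
  | nil (x : V) : StepWalk x x []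
  | cons {s : E × Bool} {y : V} {l : List (E × Bool)} :
      StepWalk (G.dst s) y l → StepWalk (G.src s) y (s :: l)

lemma IsWalk.stepWalk : ∀ {l : List (E × Bool)} {x y : V}, G.IsWalk x y l → G.StepWalk x y l
  | [], x, y, ⟨_, h⟩ => by
    obtain ⟨-, rfl⟩ | ⟨_, _, h, -⟩ := h
    · exact .nil x
    · simp at h
  | s :: l, x, y, ⟨hc, h⟩ => by
    obtain ⟨h, -⟩ | ⟨s', t, hs, hl, rfl, rfl⟩ := h
    · simp at h
    obtain rfl : s = s' := by simpa using hs
    refine .cons (IsWalk.stepWalk ⟨hc.tail, ?_⟩)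
    cases l with
    | nil => exact Or.inl ⟨rfl, by simp_all⟩
    | cons s₂ l =>
      exact Or.inr ⟨s₂, t, rfl, by simpa using hl, (List.isChain_cons_cons.mp hc).1.symm, rfl⟩

lemma StepWalk.of_append_cons {x y : V} {t : E × Bool} :
    ∀ {l₁ l₂ : List (E × Bool)},
      G.StepWalk x y (l₁ ++ t :: l₂) → G.StepWalk (G.dst t) y l₂
  | [], _, .cons h => h
  | _ :: _, _, .cons h => h.of_append_cons

lemma StepWalk.exists_trail {x y : V} {l : List (E × Bool)} (h : G.StepWalk x y l) :
    ∃ l', G.StepWalk x y l' ∧ l' ⊆ l ∧ (l'.map Prod.fst).Nodup := by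
  induction h with
  | nil x => exact ⟨[], .nil x, by simp, by simp⟩
  | @cons s y l _ ih =>
    obtain ⟨q, hq, hql, hnd⟩ := ih
    by_cases hs : s.1 ∈ q.map Prod.fst
    · obtain ⟨t, ht, hts⟩ := List.mem_map.mp hs
      obtain ⟨q₁, q₂, rfl⟩ := List.append_of_mem ht
      have hq₂ := hq.of_append_cons
      have hnd₂ : (t.1 :: q₂.map Prod.fst).Nodup := by
        rw [List.map_append] at hnd
        exact hnd.of_append_right
      have hsub : q₂ ⊆ s :: l := fun u hu => List.mem_cons_of_mem _ (hql (by simp [hu]))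
      by_cases hb : t.2 = s.2
      · obtain rfl : t = s := Prod.ext hts hb
        exact ⟨t :: q₂, .cons hq₂, List.cons_subset.mpr ⟨List.mem_cons_self, hsub⟩,
          hnd₂⟩
      · rw [dst_eq_src_of_fst_eq_of_snd_ne hts hb] at hq₂
        exact ⟨q₂, hq₂, hsub, hnd₂.of_cons⟩
    · exact ⟨s :: q, .cons hq, List.cons_subset_cons _ hql, List.nodup_cons.mpr ⟨hs, hnd⟩⟩

variable (G) in
def Reach (A : Set (E × Bool)) : V → V → Prop :=
  Relation.ReflTransGen fun u v => ∃ a ∈ A, G.src a = u ∧ G.dst a = v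

lemma Reach.mono {A B : Set (E × Bool)} (hAB : A ⊆ B) {x y : V} (h : G.Reach A x y) :
    G.Reach B x y :=
  Relation.ReflTransGen.mono (fun _ _ ⟨a, ha, hu, hv⟩ => ⟨a, hAB ha, hu, hv⟩) _ _ h

lemma Reach.of_mem {A : Set (E × Bool)} {a : E × Bool} (ha : a ∈ A) :
    G.Reach A (G.src a) (G.dst a) :=
  .single ⟨a, ha, rfl, rfl⟩

section StepWalk

variable {A : Set (E × Bool)} {x y : V} {l : List (E × Bool)}

lemma StepWalk.reach (h : G.StepWalk x y l) (hl : ∀ t ∈ l, G.Reach A (G.src t) (G.dst t)) :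
    G.Reach A x y := by
  induction h with
  | nil x => exact .refl
  | cons _ ih =>
    exact (hl _ List.mem_cons_self).trans (ih fun t ht => hl t (List.mem_cons_of_mem _ ht))

lemma StepWalk.reach_of_mem (h : G.StepWalk x y l)
    (hl : ∀ t ∈ l, G.Reach A (G.src t) (G.dst t)) {t : E × Bool} (ht : t ∈ l) :
    G.Reach A x (G.src t) ∧ G.Reach A (G.dst t) y := by
  induction h with
  | nil x => simp at ht
  | @cons s y l hw ih =>
    have hl' : ∀ t ∈ l, G.Reach A (G.src t) (G.dst t) := fun t ht =>
      hl t (List.mem_cons_of_mem _ ht)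
    rcases List.mem_cons.mp ht with rfl | ht
    · exact ⟨.refl, hw.reach hl'⟩
    · exact ⟨(hl s List.mem_cons_self).trans (ih hl' ht).1, (ih hl' ht).2⟩

end StepWalk

variable (G) in
structure IsCyclicOrientation (A : Set (E × Bool)) : Prop where
  injOn : Set.InjOn Prod.fst A
  reach_back : ∀ a ∈ A, G.Reach A (G.dst a) (G.src a)

lemma isCyclicOrientation_sUnion {c : Set (Set (E × Bool))} (hc : IsChain (· ⊆ ·) c)
    (hcA : ∀ A ∈ c, G.IsCyclicOrientation A) : G.IsCyclicOrientation (⋃₀ c) where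
  injOn := by
    rintro a ⟨A, hA, ha⟩ b ⟨B, hB, hb⟩ hab
    rcases hc.total hA hB with hAB | hBA
    · exact (hcA B hB).injOn (hAB ha) hb hab
    · exact (hcA A hA).injOn ha (hBA hb) hab
  reach_back := by
    rintro a ⟨A, hA, ha⟩
    exact ((hcA A hA).reach_back a ha).mono (Set.subset_sUnion_of_mem hA)

namespace IsCyclicOrientation

variable {A : Set (E × Bool)} (hA : G.IsCyclicOrientation A)
include hA

lemma reach_of_fst_mem {t : E × Bool} (ht : t.1 ∈ Prod.fst '' A) :
    G.Reach A (G.src t) (G.dst t) := by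
  obtain ⟨a, ha, hat⟩ := ht
  by_cases hb : a.2 = t.2
  · obtain rfl : a = t := Prod.ext hat hb
    exact .of_mem ha
  · -- backwards, along the directed cycle through the reverse arc `a`
    rw [← dst_eq_src_of_fst_eq_of_snd_ne hat hb,
      dst_eq_src_of_fst_eq_of_snd_ne hat.symm (Ne.symm hb)]
    exact hA.reach_back a ha

lemma union_closedTrail {v : V} {c : List (E × Bool)} (hc : G.StepWalk v v c)
    (hnd : (c.map Prod.fst).Nodup) :
    G.IsCyclicOrientation (A ∪ {t | t ∈ c ∧ t.1 ∉ Prod.fst '' A}) := by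
  set A' := A ∪ {t | t ∈ c ∧ t.1 ∉ Prod.fst '' A}
  have hsteps : ∀ t ∈ c, G.Reach A' (G.src t) (G.dst t) := fun t ht => by
    by_cases htA : t.1 ∈ Prod.fst '' A
    · exact (hA.reach_of_fst_mem htA).mono Set.subset_union_left
    · exact .of_mem (Or.inr ⟨ht, htA⟩)
  refine ⟨?_, ?_⟩
  · rintro a (ha | ⟨ha, haA⟩) b (hb | ⟨hb, hbA⟩) hab
    · exact hA.injOn ha hb hab
    · exact absurd ⟨a, ha, hab⟩ hbA
    · exact absurd ⟨b, hb, hab.symm⟩ haA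
    · exact List.inj_on_of_nodup_map hnd ha hb hab
  · rintro a (ha | ⟨ha, -⟩)
    · exact (hA.reach_back a ha).mono Set.subset_union_left
    · obtain ⟨hva, hav⟩ := hc.reach_of_mem hsteps ha
      exact hav.trans hva

lemma reach_of_connected (hconn : G.Connected) (htot : ∀ e, e ∈ Prod.fst '' A) (x y : V) :
    G.Reach A x y := by
  obtain ⟨l, hl⟩ := hconn x y
  exact hl.stepWalk.reach fun t _ => hA.reach_of_fst_mem (htot t.1)

end IsCyclicOrientation

lemma fst_mem_of_maximal {A : Set (E × Bool)} (hmax : Maximal G.IsCyclicOrientation A) {e : E}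
    (he : ¬ G.IsBridge e) : e ∈ Prod.fst '' A := by
  by_contra heA
  obtain ⟨l, hl, hel⟩ := not_not.mp he
  obtain ⟨p, hp, hpl, hnd⟩ := hl.stepWalk.exists_trail
  have hep : e ∉ p.map Prod.fst := fun h => hel (List.map_subset _ hpl h)
  have hc : G.StepWalk (G.src (e, false)) (G.snd e) ((e, false) :: p) := .cons hp
  have hA' := hmax.1.union_closedTrail hc (List.nodup_cons.mpr ⟨hep, hnd⟩)
  have hmem : (e, false) ∈ A :=
    hmax.2 hA' Set.subset_union_left (Or.inr ⟨List.mem_cons_self, heA⟩)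
  exact heA ⟨_, hmem, rfl⟩

lemma IsDiWalk.cons {o : E → Bool} {e : E} {z : V} {l : List E}
    (h : G.IsDiWalk o (G.headO o e) z l) : G.IsDiWalk o (G.tailO o e) z (e :: l) := by
  obtain ⟨hc, ⟨rfl, rfl⟩ | ⟨f, g, hf, hg, hfe, rfl⟩⟩ := h
  · exact ⟨List.isChain_singleton e, Or.inr ⟨e, e, rfl, rfl, rfl, rfl⟩⟩
  · cases l with
    | nil => simp at hf
    | cons f' l =>
      obtain rfl : f' = f := by simpa using hf
      exact ⟨List.isChain_cons_cons.mpr ⟨hfe.symm, hc⟩,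
        Or.inr ⟨e, g, rfl, by simpa using hg, rfl, rfl⟩⟩

lemma Reach.exists_isDiWalk {A : Set (E × Bool)} {o : E → Bool} (ho : ∀ a ∈ A, o a.1 = a.2)
    {x y : V} (h : G.Reach A x y) : ∃ l, G.IsDiWalk o x y l := by
  induction h using Relation.ReflTransGen.head_induction_on with
  | refl => exact ⟨[], List.isChain_nil, Or.inl ⟨rfl, rfl⟩⟩
  | head hxy _ ih =>
    obtain ⟨a, ha, rfl, rfl⟩ := hxy
    obtain ⟨l, hl⟩ := ih
    obtain ⟨e, b⟩ := a
    have hoe : o e = b := ho _ ha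
    refine ⟨e :: l, ?_⟩
    have := IsDiWalk.cons (e := e) (hoe ▸ hl : G.IsDiWalk o (G.headO o e) _ l)
    cases b <;> simpa [tailO, headO, src, dst, hoe] using this

end NW.Multigraph

/-- Egyed: every (possibly infinite) connected bridgeless multigraph has a strongly
connected orientation. -/
theorem stmt16 {V E : Type} (G : Multigraph V E)
    (hconn : G.Connected) (hbridge : ∀ e : E, ¬ G.IsBridge e) :
    ∃ o : E → Bool, ∀ x y : V, ∃ l, G.IsDiWalk o x y l := by
  classical
  obtain ⟨M, hM : Maximal G.IsCyclicOrientation M⟩ :=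
    zorn_subset {A | G.IsCyclicOrientation A} fun c hcS hc =>
      ⟨⋃₀ c, isCyclicOrientation_sUnion hc hcS, fun _ => Set.subset_sUnion_of_mem⟩
  have htot : ∀ e, e ∈ Prod.fst '' M := fun e => fst_mem_of_maximal hM (hbridge e)
  let o : E → Bool := fun e => decide ((e, true) ∈ M)
  have ho : ∀ a ∈ M, o a.1 = a.2 := by
    rintro ⟨e, b⟩ ha
    cases b
    · simp only [o, decide_eq_false_iff_not]
      exact fun h => absurd (hM.1.injOn h ha rfl) (by simp)
    · simpa [o] using ha
  exact ⟨o, fun x y => (hM.1.reach_of_connected hconn htot x y).exists_isDiWalk ho⟩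
end
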